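/- arXiv:2112.05072 — 7 statements merged into one kernel-verified Lean document; each statement's English description precedes it below -/
import Mathlib

section
/- Let k ≥ 1 be an integer and β ∈ ℂ. For every differentiable curve (x1, x2, y1, y2) : ℝ → ℂ⁴ satisfying Hamilton's equations for H = 2 y1 y2 + β x1^(k−1) x2, namely x1' = 2 y2, x2' = 2 y1, y1' = −β (k−1) x1^(k−2) x2, y2' = −β x1^(k−1), the function t ↦ y2(t)² + (β/k) x1(t)^k has derivative identically zero; that is, J = y2² + (β/k) x1^k is a first integral of the Hamiltonian system with bi-homogeneous potential V_{k,k−1} = β x1^(k−1) x2. -/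
open Complex

/-- `J = y2² + (β/k) x1^k` is a first integral of the Hamiltonian system with
bi-homogeneous potential `V_{k,k-1} = β x1^(k-1) x2`. -/
theorem stmt_5 (k : ℕ) (hk : 1 ≤ k) (β : ℂ)
    (x1 x2 y1 y2 : ℝ → ℂ)
    (hx1 : ∀ t, HasDerivAt x1 (2 * y2 t) t)
    (hx2 : ∀ t, HasDerivAt x2 (2 * y1 t) t)
    (hy1 : ∀ t, HasDerivAt y1 (-(β * ((k : ℂ) - 1) * x1 t ^ (k - 2) * x2 t)) t)
    (hy2 : ∀ t, HasDerivAt y2 (-(β * x1 t ^ (k - 1))) t) :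
    ∀ t, HasDerivAt (fun t => y2 t ^ 2 + (β / (k : ℂ)) * x1 t ^ k) 0 t := by
  intro t
  have hkc : (k : ℂ) ≠ 0 := Nat.cast_ne_zero.mpr (by omega)
  have h1 : HasDerivAt (fun t => y2 t ^ 2)
      (((2 : ℕ) : ℂ) * y2 t ^ (2 - 1) * (-(β * x1 t ^ (k - 1)))) t :=
    (hasDerivAt_pow 2 (y2 t)).comp t (hy2 t)
  have hx : HasDerivAt (fun t => x1 t ^ k)
      ((k : ℂ) * x1 t ^ (k - 1) * (2 * y2 t)) t :=
    (hasDerivAt_pow k (x1 t)).comp t (hx1 t)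
  have h2 := hx.const_mul (β / (k : ℂ))
  convert h1.add h2 using 1
  push_cast
  rfl
  · rfl
  · push_cast
    field_simp
    ring
end

section
/- For every differentiable curve (x1, x2, y1, y2) : ℝ → ℂ⁴ satisfying Hamilton's equations for H = 2 y1 y2 + x1² x2⁵, namely x1' = 2 y2, x2' = 2 y1, y1' = −2 x1 x2⁵, y2' = −5 x1² x2⁴, the function t ↦ 16 y1³ (y1 x1 − y2 x2) + x2⁶ (4 y1² x1² − 8 y1 y2 x1 x2 + y2² x2²) − x1³ x2¹² has derivative identically zero; that is, J = 16 y1³(y1 x1 − y2 x2) + x2⁶(4 y1² x1² − 8 y1 y2 x1 x2 + y2² x2²) − x1³ x2¹² is a first integral of the Hamiltonian system with bi-homogeneous potential V_{7,2} = x1² x2⁵. -/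
open Complex

private lemma hasDerivAt_fun_pow {f : ℝ → ℂ} {f' : ℂ} {t : ℝ}
    (hf : HasDerivAt f f' t) (n : ℕ) :
    HasDerivAt (fun t => f t ^ n) ((n : ℂ) * f t ^ (n - 1) * f') t := by
  convert (hasDerivAt_pow n (f t)).comp t hf using 1
  · rfl
  · rfl

set_option maxHeartbeats 1000000 in
/-- `J = 16 y1³(y1 x1 - y2 x2) + x2⁶(4 y1² x1² - 8 y1 y2 x1 x2 + y2² x2²) - x1³ x2¹²`
is a first integral of the Hamiltonian system with bi-homogeneous potential
`V_{7,2} = x1² x2⁵`. -/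
theorem stmt_6 (x1 x2 y1 y2 : ℝ → ℂ)
    (hx1 : ∀ t, HasDerivAt x1 (2 * y2 t) t)
    (hx2 : ∀ t, HasDerivAt x2 (2 * y1 t) t)
    (hy1 : ∀ t, HasDerivAt y1 (-(2 * x1 t * x2 t ^ 5)) t)
    (hy2 : ∀ t, HasDerivAt y2 (-(5 * x1 t ^ 2 * x2 t ^ 4)) t) :
    ∀ t, HasDerivAt (fun t =>
        16 * y1 t ^ 3 * (y1 t * x1 t - y2 t * x2 t)
          + x2 t ^ 6 * (4 * y1 t ^ 2 * x1 t ^ 2 - 8 * y1 t * y2 t * x1 t * x2 t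
            + y2 t ^ 2 * x2 t ^ 2)
          - x1 t ^ 3 * x2 t ^ 12) 0 t := by
  intro t
  have A : HasDerivAt (fun t => 16 * y1 t ^ 3 * (y1 t * x1 t - y2 t * x2 t)) _ t :=
    ((hasDerivAt_const t (16:ℂ)).mul (hasDerivAt_fun_pow (hy1 t) 3)).mul
      (((hy1 t).mul (hx1 t)).sub ((hy2 t).mul (hx2 t)))
  have B : HasDerivAt (fun t => x2 t ^ 6 * (4 * y1 t ^ 2 * x1 t ^ 2
      - 8 * y1 t * y2 t * x1 t * x2 t + y2 t ^ 2 * x2 t ^ 2)) _ t := (hasDerivAt_fun_pow (hx2 t) 6).mul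
    (((((hasDerivAt_const t (4:ℂ)).mul (hasDerivAt_fun_pow (hy1 t) 2)).mul (hasDerivAt_fun_pow (hx1 t) 2)).sub
      (((((hasDerivAt_const t (8:ℂ)).mul (hy1 t)).mul (hy2 t)).mul (hx1 t)).mul (hx2 t))).add
      ((hasDerivAt_fun_pow (hy2 t) 2).mul (hasDerivAt_fun_pow (hx2 t) 2)))
  have C : HasDerivAt (fun t => x1 t ^ 3 * x2 t ^ 12) _ t := (hasDerivAt_fun_pow (hx1 t) 3).mul (hasDerivAt_fun_pow (hx2 t) 12)
  have H := (A.add B).sub C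
  convert H using 1
  · rfl
  · rfl
  · simp only [Pi.mul_apply]
    ring
end

section
/- For every differentiable curve (x1, x2, y1, y2) : ℝ → ℂ⁴ satisfying Hamilton's equations for H = 2 y1 y2 + x1⁵ x2², namely x1' = 2 y2, x2' = 2 y1, y1' = −5 x1⁴ x2², y2' = −2 x1⁵ x2, the function t ↦ 16 y2³ (y2 x2 − y1 x1) + x1⁶ (4 y2² x2² − 8 y1 y2 x1 x2 + y1² x1²) − x2³ x1¹² has derivative identically zero; that is, J = 16 y2³(y2 x2 − y1 x1) + x1⁶(4 y2² x2² − 8 y1 y2 x1 x2 + y1² x1²) − x2³ x1¹² is a first integral of the Hamiltonian system with bi-homogeneous potential V_{7,5} = x1⁵ x2². -/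
open Complex

private lemma hpow' {f : ℝ → ℂ} {f' : ℂ} {t : ℝ} (h : HasDerivAt f f' t) (n : ℕ) :
    HasDerivAt (fun t => f t ^ n) (n * f t ^ (n - 1) * f') t := by
  induction n with
  | zero => simpa using hasDerivAt_const t (1 : ℂ)
  | succ m ih =>
    have H := ih.mul h
    have hfun : (fun t => f t ^ (m + 1)) = fun x => f x ^ m * f x := by
      ext x; rw [pow_succ]
    rw [hfun]
    convert H using 1
    · rfl
    · rfl
    cases m with
    | zero => simp
    | succ k =>
      simp only [Nat.add_sub_cancel]
      push_cast
      ring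

/-- `J = 16 y2³(y2 x2 - y1 x1) + x1⁶(4 y2² x2² - 8 y1 y2 x1 x2 + y1² x1²) - x2³ x1¹²`
is a first integral of the Hamiltonian system with bi-homogeneous potential
`V_{7,5} = x1⁵ x2²`. -/
theorem stmt_7 (x1 x2 y1 y2 : ℝ → ℂ)
    (hx1 : ∀ t, HasDerivAt x1 (2 * y2 t) t)
    (hx2 : ∀ t, HasDerivAt x2 (2 * y1 t) t)
    (hy1 : ∀ t, HasDerivAt y1 (-(5 * x1 t ^ 4 * x2 t ^ 2)) t)
    (hy2 : ∀ t, HasDerivAt y2 (-(2 * x1 t ^ 5 * x2 t)) t) :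
    ∀ t, HasDerivAt (fun t =>
        16 * y2 t ^ 3 * (y2 t * x2 t - y1 t * x1 t)
          + x1 t ^ 6 * (4 * y2 t ^ 2 * x2 t ^ 2 - 8 * y1 t * y2 t * x1 t * x2 t
            + y1 t ^ 2 * x1 t ^ 2)
          - x2 t ^ 3 * x1 t ^ 12) 0 t := by
  intro t
  have h : HasDerivAt (fun t =>
        16 * y2 t ^ 3 * (y2 t * x2 t - y1 t * x1 t)
          + x1 t ^ 6 * (4 * y2 t ^ 2 * x2 t ^ 2 - 8 * y1 t * y2 t * x1 t * x2 t
            + y1 t ^ 2 * x1 t ^ 2)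
          - x2 t ^ 3 * x1 t ^ 12)
      (16 * (3 * y2 t ^ 2 * (-(2 * x1 t ^ 5 * x2 t))) * (y2 t * x2 t - y1 t * x1 t)
        + 16 * y2 t ^ 3 * ((-(2 * x1 t ^ 5 * x2 t)) * x2 t + y2 t * (2 * y1 t)
            - ((-(5 * x1 t ^ 4 * x2 t ^ 2)) * x1 t + y1 t * (2 * y2 t)))
        + (6 * x1 t ^ 5 * (2 * y2 t)) * (4 * y2 t ^ 2 * x2 t ^ 2 - 8 * y1 t * y2 t * x1 t * x2 t
            + y1 t ^ 2 * x1 t ^ 2)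
        + x1 t ^ 6 * (4 * (2 * y2 t * (-(2 * x1 t ^ 5 * x2 t))) * x2 t ^ 2
            + 4 * y2 t ^ 2 * (2 * x2 t * (2 * y1 t))
            - (8 * ((-(5 * x1 t ^ 4 * x2 t ^ 2)) * y2 t + y1 t * (-(2 * x1 t ^ 5 * x2 t))) * x1 t * x2 t
               + 8 * y1 t * y2 t * ((2 * y2 t) * x2 t + x1 t * (2 * y1 t)))
            + (2 * y1 t * (-(5 * x1 t ^ 4 * x2 t ^ 2)) * x1 t ^ 2 + y1 t ^ 2 * (2 * x1 t * (2 * y2 t))))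
        - (3 * x2 t ^ 2 * (2 * y1 t) * x1 t ^ 12 + x2 t ^ 3 * (12 * x1 t ^ 11 * (2 * y2 t)))) t := by
    have c16 := hasDerivAt_const t (16 : ℂ)
    have c4 := hasDerivAt_const t (4 : ℂ)
    have c8 := hasDerivAt_const t (8 : ℂ)
    have A := (c16.mul (hpow' (hy2 t) 3)).mul
      (((hy2 t).mul (hx2 t)).sub ((hy1 t).mul (hx1 t)))
    have B := (hpow' (hx1 t) 6).mul
      (((((c4.mul (hpow' (hy2 t) 2)).mul (hpow' (hx2 t) 2)).sub
        ((((c8.mul (hy1 t)).mul (hy2 t)).mul (hx1 t)).mul (hx2 t))).add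
        ((hpow' (hy1 t) 2).mul (hpow' (hx1 t) 2))))
    have C := (hpow' (hx2 t) 3).mul (hpow' (hx1 t) 12)
    have := (A.add B).sub C
    convert this using 1; rfl; rfl; simp only [Pi.mul_apply, Pi.sub_apply, Pi.add_apply]; ring
  convert h using 1
  ring
end

section
/- Let k ≥ 1 be an integer and α ∈ ℂ. For every differentiable curve (q1, q2, p1, p2) : ℝ → ℂ⁴ satisfying Hamilton's equations q1' = p1, q2' = p2, p1' = −∂V/∂q1, p2' = −∂V/∂q2 for the potential V(q1,q2) = α (q2 − i q1)(q2 + i q1)^(k−1), the function t ↦ (1/4)(p1(t) − i p2(t))² − (i^k α / k) (q1(t) − i q2(t))^k has derivative identically zero; that is, J = (1/4)(p1 − i p2)² − (i^k α/k)(q1 − i q2)^k is a first integral of the Hamiltonian system with exceptional potential V_{k,1}. -/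
open Complex

private lemma hasDerivAt_pow_comp {f : ℝ → ℂ} {f' : ℂ} {t : ℝ} (n : ℕ)
    (h : HasDerivAt f f' t) :
    HasDerivAt (fun t => f t ^ n) ((n : ℂ) * f t ^ (n - 1) * f') t := by
  simpa [Function.comp_def, mul_assoc] using (hasDerivAt_pow n (f t)).comp t h

/-- `J = (1/4)(p1 - i p2)² - (i^k α / k)(q1 - i q2)^k` is a first integral of the
Hamiltonian system with exceptional potential
`V_{k,1} = α (q2 - i q1)(q2 + i q1)^(k-1)`.  Here
`∂V/∂q1 = α(-i (q2 + i q1)^(k-1) + i (k-1)(q2 - i q1)(q2 + i q1)^(k-2))` and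
`∂V/∂q2 = α((q2 + i q1)^(k-1) + (k-1)(q2 - i q1)(q2 + i q1)^(k-2))`. -/
theorem stmt_11 (k : ℕ) (hk : 1 ≤ k) (α : ℂ)
    (q1 q2 p1 p2 : ℝ → ℂ)
    (hq1 : ∀ t, HasDerivAt q1 (p1 t) t)
    (hq2 : ∀ t, HasDerivAt q2 (p2 t) t)
    (hp1 : ∀ t, HasDerivAt p1
      (-(α * (-I * (q2 t + I * q1 t) ^ (k - 1)
        + I * ((k : ℂ) - 1) * (q2 t - I * q1 t) * (q2 t + I * q1 t) ^ (k - 2)))) t)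
    (hp2 : ∀ t, HasDerivAt p2
      (-(α * ((q2 t + I * q1 t) ^ (k - 1)
        + ((k : ℂ) - 1) * (q2 t - I * q1 t) * (q2 t + I * q1 t) ^ (k - 2)))) t) :
    ∀ t, HasDerivAt (fun t =>
        (1 / 4 : ℂ) * (p1 t - I * p2 t) ^ 2
          - (I ^ k * α / (k : ℂ)) * (q1 t - I * q2 t) ^ k) 0 t := by
  obtain ⟨m, rfl⟩ : ∃ m, k = m + 1 := ⟨k - 1, by omega⟩
  intro t
  have hP : HasDerivAt (fun t => p1 t - I * p2 t)
      ((-(α * (-I * (q2 t + I * q1 t) ^ (m + 1 - 1)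
        + I * ((m + 1 : ℕ) - 1 : ℂ) * (q2 t - I * q1 t) * (q2 t + I * q1 t) ^ (m + 1 - 2)))) -
       I * (-(α * ((q2 t + I * q1 t) ^ (m + 1 - 1)
        + ((m + 1 : ℕ) - 1 : ℂ) * (q2 t - I * q1 t) * (q2 t + I * q1 t) ^ (m + 1 - 2))))) t :=
    (hp1 t).sub ((hp2 t).const_mul I)
  have hQ : HasDerivAt (fun t => q1 t - I * q2 t) (p1 t - I * p2 t) t :=
    (hq1 t).sub ((hq2 t).const_mul I)
  have H := (((hasDerivAt_pow_comp 2 hP).const_mul (1 / 4 : ℂ)).sub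
    (((hasDerivAt_pow_comp (m + 1) hQ)).const_mul (I ^ (m + 1) * α / ((m + 1 : ℕ) : ℂ))))
  convert H using 1
  case e'_4 => rfl
  case e'_8 => rfl
  have hq : q1 t - I * q2 t = -I * (q2 t + I * q1 t) := by
    linear_combination q1 t * Complex.I_sq
  have hII : (-I) ^ m * I ^ m = 1 := by
    rw [← mul_pow]; simp
  have hI : I ^ (m + 1) * (q1 t - I * q2 t) ^ m = I * (q2 t + I * q1 t) ^ m := by
    rw [hq, mul_pow, pow_succ]
    linear_combination (I * (q2 t + I * q1 t) ^ m) * hII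
  have hc : ((m : ℂ) + 1) ≠ 0 := Nat.cast_add_one_ne_zero m
  simp only [Nat.add_sub_cancel]
  push_cast
  have key : I ^ (m + 1) * α / ((m : ℂ) + 1) *
      (((m : ℂ) + 1) * (q1 t - I * q2 t) ^ m * (p1 t - I * p2 t)) =
      I * α * (q2 t + I * q1 t) ^ m * (p1 t - I * p2 t) := by
    field_simp
    linear_combination (α * (p1 t - I * p2 t)) * hI
  rw [key]
  ring
end

section
/- Let k ≥ 1 be an integer and α ∈ ℂ. For every differentiable curve (q1, q2, p1, p2) : ℝ → ℂ⁴ satisfying Hamilton's equations q1' = p1, q2' = p2, p1' = −∂V/∂q1, p2' = −∂V/∂q2 for the potential V(q1,q2) = α (q2 − i q1)^(k−1)(q2 + i q1), the function t ↦ (1/4)(p1(t) + i p2(t))² + ((−1)^(k+1) i^k α / k) (q1(t) + i q2(t))^k has derivative identically zero; that is, J = (1/4)(p1 + i p2)² + ((−1)^(k+1) i^k α/k)(q1 + i q2)^k is a first integral of the Hamiltonian system with exceptional potential V_{k,k−1}. -/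
open Complex

lemma key_12 (m : ℕ) (α A B P : ℂ) :
    (1 / 4 : ℂ) * ((2 : ℂ) * P ^ (2 - 1) *
        (-(α * (-I * ((m + 1 : ℂ) - 1) * A ^ (m + 1 - 2) * B + I * A ^ m))
          + I * -(α * (((m + 1 : ℂ) - 1) * A ^ (m + 1 - 2) * B + A ^ m))))
      + ((-1 : ℂ) ^ (m + 1 + 1) * I ^ (m + 1) * α / ((m : ℂ) + 1))
        * (((m : ℂ) + 1) * (I * A) ^ m * P) = 0 := by
  have hne : ((m : ℂ) + 1) ≠ 0 := Nat.cast_add_one_ne_zero m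
  have hmm : ((-1 : ℂ)) ^ m * (-1 : ℂ) ^ m = 1 := by
    rw [← mul_pow]; norm_num
  rw [mul_pow]
  field_simp
  ring_nf
  rw [show (I:ℂ)^(m*2) = ((-1:ℂ))^m from by
        rw [mul_comm, pow_mul, I_sq]]
  linear_combination (P * α * I * A ^ m * 4) * hmm

/-- `J = (1/4)(p1 + i p2)² + ((-1)^(k+1) i^k α / k)(q1 + i q2)^k` is a first integral
of the Hamiltonian system with exceptional potential
`V_{k,k-1} = α (q2 - i q1)^(k-1)(q2 + i q1)`.  Here
`∂V/∂q1 = α(-i (k-1)(q2 - i q1)^(k-2)(q2 + i q1) + i (q2 - i q1)^(k-1))` and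
`∂V/∂q2 = α((k-1)(q2 - i q1)^(k-2)(q2 + i q1) + (q2 - i q1)^(k-1))`. -/
theorem stmt_12 (k : ℕ) (hk : 1 ≤ k) (α : ℂ)
    (q1 q2 p1 p2 : ℝ → ℂ)
    (hq1 : ∀ t, HasDerivAt q1 (p1 t) t)
    (hq2 : ∀ t, HasDerivAt q2 (p2 t) t)
    (hp1 : ∀ t, HasDerivAt p1
      (-(α * (-I * ((k : ℂ) - 1) * (q2 t - I * q1 t) ^ (k - 2) * (q2 t + I * q1 t)
        + I * (q2 t - I * q1 t) ^ (k - 1)))) t)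
    (hp2 : ∀ t, HasDerivAt p2
      (-(α * (((k : ℂ) - 1) * (q2 t - I * q1 t) ^ (k - 2) * (q2 t + I * q1 t)
        + (q2 t - I * q1 t) ^ (k - 1)))) t) :
    ∀ t, HasDerivAt (fun t =>
        (1 / 4 : ℂ) * (p1 t + I * p2 t) ^ 2
          + ((-1 : ℂ) ^ (k + 1) * I ^ k * α / (k : ℂ)) * (q1 t + I * q2 t) ^ k) 0 t := by
  intro t
  obtain ⟨m, rfl⟩ : ∃ m, k = m + 1 := ⟨k - 1, (Nat.succ_pred_eq_of_pos hk).symm⟩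
  have hP : HasDerivAt (fun t => p1 t + I * p2 t)
      (-(α * (-I * (((m+1 : ℕ) : ℂ) - 1) * (q2 t - I * q1 t) ^ (m + 1 - 2) * (q2 t + I * q1 t)
          + I * (q2 t - I * q1 t) ^ (m + 1 - 1)))
        + I * -(α * ((((m+1 : ℕ) : ℂ) - 1) * (q2 t - I * q1 t) ^ (m + 1 - 2) * (q2 t + I * q1 t)
          + (q2 t - I * q1 t) ^ (m + 1 - 1)))) t :=
    (hp1 t).add ((hp2 t).const_mul I)
  have hQ : HasDerivAt (fun t => q1 t + I * q2 t) (p1 t + I * p2 t) t :=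
    (hq1 t).add ((hq2 t).const_mul I)
  have hP2 : HasDerivAt (fun t => (p1 t + I * p2 t) ^ 2)
      (((2:ℕ) : ℂ) * (p1 t + I * p2 t) ^ (2 - 1)
        * (-(α * (-I * (((m+1 : ℕ) : ℂ) - 1) * (q2 t - I * q1 t) ^ (m + 1 - 2) * (q2 t + I * q1 t)
            + I * (q2 t - I * q1 t) ^ (m + 1 - 1)))
          + I * -(α * ((((m+1 : ℕ) : ℂ) - 1) * (q2 t - I * q1 t) ^ (m + 1 - 2) * (q2 t + I * q1 t)
            + (q2 t - I * q1 t) ^ (m + 1 - 1))))) t :=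
    by have := (hasDerivAt_pow 2 (p1 t + I * p2 t)).comp t hP; exact this
  have hQk : HasDerivAt (fun t => (q1 t + I * q2 t) ^ (m + 1))
      ((((m+1 : ℕ)) : ℂ) * (q1 t + I * q2 t) ^ (m + 1 - 1) * (p1 t + I * p2 t)) t :=
    by have := (hasDerivAt_pow (m+1) (q1 t + I * q2 t)).comp t hQ; exact this
  have h := (hP2.const_mul (1/4 : ℂ)).add
    (hQk.const_mul ((-1 : ℂ) ^ (m + 1 + 1) * I ^ (m + 1) * α / ((m+1 : ℕ) : ℂ)))
  convert h using 1
  · rfl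
  · rfl
  have hiq : q1 t + I * q2 t = I * (q2 t - I * q1 t) := by
    rw [show I * (q2 t - I * q1 t) = q2 t * I - I * I * q1 t from by ring, I_mul_I]; ring
  rw [Nat.add_sub_cancel, hiq]
  push_cast
  exact (key_12 m α (q2 t - I * q1 t) (q2 t + I * q1 t) (p1 t + I * p2 t)).symm
end

section
/- Let k be a positive even integer, l an integer with 1 ≤ l ≤ k − 1, α ∈ ℂ with α ≠ 0, and c ∈ ℂ with c ≠ 0. Then the following are equivalent: (i) for all q1 ∈ ℂ, α(c q1 + i q1)^(k−l−1)(c q1 − i q1)^(l−1)(i q1 (k − 2l) − k c q1) = c · α(c q1 + i q1)^(k−l−1)(c q1 − i q1)^(l−1)(i c q1 (2l − k) − k q1); (ii) c = i, or c = −i, or k = 2l. (Condition (i) expresses that the Hamiltonian vector field of H = (p1² + p2²)/2 + V_{k,l} is tangent to the plane Γ = {(q1, c q1, p1, c p1) : q1, p1 ∈ ℂ}, i.e. that Γ is an invariant plane of the Hamiltonian system with exceptional potential V_{k,l}.) -/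
open Complex

/-- The plane `Γ = {(q1, c q1, p1, c p1)}` is an invariant plane of the Hamiltonian
system with exceptional potential `V_{k,l}` (with `k` even, `1 ≤ l ≤ k - 1`,
`α ≠ 0`, `c ≠ 0`) if and only if `c = i`, `c = -i`, or `k = 2l`. -/
theorem stmt_15 (k l : ℕ) (hk : 0 < k) (hkeven : Even k)
    (hl1 : 1 ≤ l) (hl2 : l ≤ k - 1) (α : ℂ) (hα : α ≠ 0) (c : ℂ) (hc : c ≠ 0) :
    (∀ q1 : ℂ,
        α * (c * q1 + I * q1) ^ (k - l - 1) * (c * q1 - I * q1) ^ (l - 1)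
            * (I * q1 * ((k : ℂ) - 2 * (l : ℂ)) - (k : ℂ) * (c * q1))
          = c * (α * (c * q1 + I * q1) ^ (k - l - 1) * (c * q1 - I * q1) ^ (l - 1)
            * (I * (c * q1) * (2 * (l : ℂ) - (k : ℂ)) - (k : ℂ) * q1)))
      ↔ (c = I ∨ c = -I ∨ k = 2 * l) := by
  have key : ∀ q1 : ℂ,
      (α * (c * q1 + I * q1) ^ (k - l - 1) * (c * q1 - I * q1) ^ (l - 1)
            * (I * q1 * ((k : ℂ) - 2 * (l : ℂ)) - (k : ℂ) * (c * q1))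
          = c * (α * (c * q1 + I * q1) ^ (k - l - 1) * (c * q1 - I * q1) ^ (l - 1)
            * (I * (c * q1) * (2 * (l : ℂ) - (k : ℂ)) - (k : ℂ) * q1)))
      ↔ α * (c + I) ^ (k - l - 1) * (c - I) ^ (l - 1) * q1 ^ (k - l - 1) * q1 ^ (l - 1)
          * q1 * (I * ((k : ℂ) - 2 * (l : ℂ)) * (c ^ 2 + 1)) = 0 := by
    intro q1
    rw [show c * q1 + I * q1 = (c + I) * q1 from by ring,
        show c * q1 - I * q1 = (c - I) * q1 from by ring, mul_pow, mul_pow]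
    constructor
    · intro h; linear_combination h
    · intro h; linear_combination h
  constructor
  · intro h
    by_cases hcI : c = I
    · exact Or.inl hcI
    by_cases hcI' : c = -I
    · exact Or.inr (Or.inl hcI')
    refine Or.inr (Or.inr ?_)
    have hne1 : c + I ≠ 0 := fun H => hcI' (by linear_combination H)
    have hne2 : c - I ≠ 0 := fun H => hcI (by linear_combination H)
    have hc2 : c ^ 2 + 1 ≠ 0 := by
      intro H
      rcases mul_eq_zero.mp (show (c - I) * (c + I) = 0 by
        rw [show (c - I) * (c + I) = c ^ 2 + 1 from by
          have := Complex.I_sq; linear_combination -this]; exact H) with h' | h'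
      · exact hne2 h'
      · exact hne1 h'
    have P1 := (key 1).mp (h 1)
    simp only [one_pow, mul_one, mul_eq_zero] at P1
    have hklc : (k : ℂ) - 2 * (l : ℂ) = 0 := by
      rcases P1 with ((hh | hh) | hh) | ((hh | hh) | hh)
      · exact absurd hh hα
      · exact absurd (pow_eq_zero_iff'.mp hh).1 hne1
      · exact absurd (pow_eq_zero_iff'.mp hh).1 hne2
      · exact absurd hh Complex.I_ne_zero
      · exact hh
      · exact absurd hh hc2
    have : (k : ℂ) = ((2 * l : ℕ) : ℂ) := by push_cast; linear_combination hklc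
    exact_mod_cast this
  · intro h q1
    apply (key q1).mpr
    rcases h with h | h | h
    · have : c ^ 2 + 1 = 0 := by
        rw [h]; have := Complex.I_sq; linear_combination this
      rw [this]; ring
    · have : c ^ 2 + 1 = 0 := by
        rw [h]; have := Complex.I_sq; linear_combination this
      rw [this]; ring
    · have : (k : ℂ) - 2 * (l : ℂ) = 0 := by
        rw [h]; push_cast; ring
      rw [this]; ring
end

section
/- Let l ≥ 1 be an integer, α ∈ ℂ, and c ∈ ℂ. Suppose q1, q2, p1, p2 : ℝ → ℂ are differentiable and satisfy q1' = p1, q2' = p2, p1'(t) = −2 l α q1(t) (q1(t)² + q2(t)²)^(l−1), p2'(t) = −2 l α q2(t) (q1(t)² + q2(t)²)^(l−1) for all t ∈ ℝ, and that q2(0) = c q1(0) and p2(0) = c p1(0). Then q2(t) = c q1(t) and p2(t) = c p1(t) for all t ∈ ℝ; that is, the planes Γ_c = {(q1, c q1, p1, c p1)} are invariant planes of the Hamiltonian system with potential V_{2l,l} = α (q1² + q2²)^l. -/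
open Complex

/-- The planes `Γ_c = {(q1, c q1, p1, c p1)}` are invariant planes of the
Hamiltonian system with potential `V_{2l,l} = α (q1² + q2²)^l`: any solution
starting on `Γ_c` stays on `Γ_c` for all time. -/
theorem stmt_16 (l : ℕ) (hl : 1 ≤ l) (α : ℂ) (c : ℂ)
    (q1 q2 p1 p2 : ℝ → ℂ)
    (hq1 : ∀ t, HasDerivAt q1 (p1 t) t)
    (hq2 : ∀ t, HasDerivAt q2 (p2 t) t)
    (hp1 : ∀ t, HasDerivAt p1 (-(2 * (l : ℂ) * α * q1 t * (q1 t ^ 2 + q2 t ^ 2) ^ (l - 1))) t)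
    (hp2 : ∀ t, HasDerivAt p2 (-(2 * (l : ℂ) * α * q2 t * (q1 t ^ 2 + q2 t ^ 2) ^ (l - 1))) t)
    (hq0 : q2 0 = c * q1 0) (hp0 : p2 0 = c * p1 0) :
    ∀ t : ℝ, q2 t = c * q1 t ∧ p2 t = c * p1 t := by
  -- the coefficient of the linear ODE for the difference
  set Kc : ℝ → ℂ := fun t => 2 * (l : ℂ) * α * (q1 t ^ 2 + q2 t ^ 2) ^ (l - 1) with hKc
  have hcq1 : Continuous q1 := by
    refine continuous_iff_continuousAt.2 fun t => (hq1 t).continuousAt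
  have hcq2 : Continuous q2 := by
    refine continuous_iff_continuousAt.2 fun t => (hq2 t).continuousAt
  have hKcont : Continuous Kc := by
    exact continuous_const.mul (((hcq1.pow 2).add (hcq2.pow 2)).pow (l - 1))
  -- the difference trajectory
  set f : ℝ → ℂ × ℂ := fun t => (q2 t - c * q1 t, p2 t - c * p1 t) with hf
  have hf' : ∀ t, HasDerivAt f (p2 t - c * p1 t, -(Kc t) * (q2 t - c * q1 t)) t := by
    intro t
    have h1 : HasDerivAt (fun t => q2 t - c * q1 t) (p2 t - c * p1 t) t :=
      (hq2 t).sub ((hq1 t).const_mul c)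
    have h2 : HasDerivAt (fun t => p2 t - c * p1 t)
        (-(Kc t) * (q2 t - c * q1 t)) t := by
      have := (hp2 t).sub ((hp1 t).const_mul c)
      refine this.congr_deriv ?_
      simp only [hKc]
      ring
    exact h1.prodMk h2
  intro t₁
  -- work on a compact interval containing 0 and t₁
  set a : ℝ := -(|t₁| + 1) with ha
  set b : ℝ := |t₁| + 1 with hb
  have hab : a < b := by
    have := abs_nonneg t₁; simp only [ha, hb]; linarith
  have h0mem : (0 : ℝ) ∈ Set.Ioo a b := by
    constructor <;> [simp only [ha]; simp only [hb]] <;> nlinarith [abs_nonneg t₁]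
  have ht₁mem : t₁ ∈ Set.Ioo a b := by
    constructor <;> [simp only [ha]; simp only [hb]] <;>
      nlinarith [abs_nonneg t₁, neg_abs_le t₁, le_abs_self t₁]
  -- bound the coefficient on [a, b]
  obtain ⟨C, hC⟩ := (isCompact_Icc (a := a) (b := b)).exists_bound_of_continuousOn
    hKcont.continuousOn
  have hC0 : 0 ≤ C := le_trans (norm_nonneg _) (hC a ⟨le_rfl, hab.le⟩)
  -- the (clamped) vector field
  set proj : ℝ → ℝ := fun t => max a (min t b) with hproj
  have hprojmem : ∀ t, proj t ∈ Set.Icc a b := by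
    intro t
    refine ⟨le_max_left _ _, max_le hab.le (min_le_right _ _)⟩
  have hprojeq : ∀ t ∈ Set.Icc a b, proj t = t := by
    intro t ht
    simp only [hproj, min_eq_left ht.2, max_eq_right ht.1]
  set V : ℝ → ℂ × ℂ → ℂ × ℂ := fun t x => (x.2, -(Kc (proj t)) * x.1) with hV
  set K : NNReal := ⟨max 1 C, le_trans zero_le_one (le_max_left _ _)⟩ with hK
  have hvLip : ∀ t, LipschitzWith K (V t) := by
    intro t
    apply LipschitzWith.of_dist_le_mul
    intro x y
    rw [Prod.dist_eq, Prod.dist_eq]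
    have hcoe : (K : ℝ) = max 1 C := rfl
    rw [hcoe]
    have hd1 : dist (V t x).1 (V t y).1 = dist x.2 y.2 := rfl
    have hd2 : dist (V t x).2 (V t y).2 = ‖Kc (proj t)‖ * dist x.1 y.1 := by
      simp only [hV, Complex.dist_eq]
      rw [show -Kc (proj t) * x.1 - -Kc (proj t) * y.1 = -(Kc (proj t) * (x.1 - y.1)) by
        ring, norm_neg]
      exact norm_mul _ _
    rw [hd1, hd2]
    have hKb : ‖Kc (proj t)‖ ≤ C := hC _ (hprojmem t)
    apply max_le
    · calc dist x.2 y.2 ≤ max (dist x.1 y.1) (dist x.2 y.2) := le_max_right _ _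
        _ ≤ max 1 C * max (dist x.1 y.1) (dist x.2 y.2) := by
            nlinarith [le_max_left (1:ℝ) C, dist_nonneg (x := x.1) (y := y.1),
              dist_nonneg (x := x.2) (y := y.2), le_max_left (dist x.1 y.1) (dist x.2 y.2),
              le_max_right (dist x.1 y.1) (dist x.2 y.2)]
    · calc ‖Kc (proj t)‖ * dist x.1 y.1 ≤ max 1 C * dist x.1 y.1 := by
            nlinarith [dist_nonneg (x := x.1) (y := y.1), le_max_right (1:ℝ) C,
              norm_nonneg (Kc (proj t))]
        _ ≤ max 1 C * max (dist x.1 y.1) (dist x.2 y.2) := by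
            have h1 : (0:ℝ) ≤ max 1 C := le_trans zero_le_one (le_max_left _ _)
            exact mul_le_mul_of_nonneg_left (le_max_left _ _) h1
  -- apply uniqueness with the zero solution
  have huniq := ODE_solution_unique_of_mem_Ioo (v := V) (s := fun _ => Set.univ)
    (K := K) (f := f) (g := fun _ => (0, 0)) (t₀ := 0) (a := a) (b := b)
    (fun t _ => (hvLip t).lipschitzOnWith) h0mem
    (fun t ht => by
      refine ⟨?_, Set.mem_univ _⟩
      have := hf' t
      refine this.congr_deriv ?_
      simp only [hV, hf, hprojeq t (Set.mem_Icc_of_Ioo ht)])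
    (fun t ht => by
      refine ⟨?_, Set.mem_univ _⟩
      have : V t ((0 : ℂ), (0 : ℂ)) = (0, 0) := by simp [hV]
      rw [this]
      exact hasDerivAt_const t _)
    (by simp [hf, hq0, hp0])
  have := huniq ht₁mem
  simp only [hf, Prod.mk.injEq] at this
  constructor
  · linear_combination this.1
  · linear_combination this.2
end
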